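/- arXiv:1010.1388 — 3 statements merged into one kernel-verified Lean document; each statement's English description precedes it below -/
import Mathlib

section
/- Let ℓ = (ℓ₁,…,ℓₙ) be positive reals with ℓ₁ ≤ ⋯ ≤ ℓ_{n-1} and suppose ℓ is generic. Then c_k(ℓ), defined as the number of (k+1)-element subsets J ⊆ {1,…,n} containing n−1 but not n that are short or median with respect to ℓ, equals α_k(L'), the number of (k+1)-element subsets of {1,…,n−1} containing n−1 that are short with respect to L' = (ℓ₁,…,ℓ_{n-2}, ℓ_{n-1} − ℓ_n), provided ℓ_{n-1} > ℓ_n. -/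
/-- For generic ordered `ℓ` with `ℓ_{n-1} > ℓ_n`, the number `c_k(ℓ)` of
`(k+1)`-element subsets of `{1,…,n}` containing `n-1` (0-based index `n-2`)
but not `n` (0-based index `n-1`) that are short or median with respect to `ℓ`
equals `α_k(L')`, the number of `(k+1)`-element subsets of `{1,…,n-1}`
containing `n-1` that are short with respect to
`L' = (ℓ₁,…,ℓ_{n-2}, ℓ_{n-1} - ℓ_n)`. -/
theorem stmt3 (n k : ℕ) (hn : 2 ≤ n) (ℓ : Fin n → ℝ) (hpos : ∀ i, 0 < ℓ i)
    (hmono : ∀ i j : Fin n, (i : ℕ) ≤ (j : ℕ) → (j : ℕ) < n - 1 → ℓ i ≤ ℓ j)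
    (hgen : ∀ ε : Fin n → ℝ, (∀ i, ε i = 1 ∨ ε i = -1) → ∑ i, ε i * ℓ i ≠ 0)
    (hlast : ℓ ⟨n - 1, by omega⟩ < ℓ ⟨n - 2, by omega⟩)
    (L' : Fin (n - 1) → ℝ)
    (hL' : ∀ i : Fin (n - 1), L' i =
      if (i : ℕ) = n - 2 then ℓ ⟨n - 2, by omega⟩ - ℓ ⟨n - 1, by omega⟩
      else ℓ ⟨(i : ℕ), by omega⟩) :
    {J : Finset (Fin n) | J.card = k + 1 ∧ (⟨n - 2, by omega⟩ : Fin n) ∈ J ∧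
        (⟨n - 1, by omega⟩ : Fin n) ∉ J ∧
        (∑ i ∈ J, ℓ i < ∑ i ∈ Jᶜ, ℓ i ∨ ∑ i ∈ J, ℓ i = ∑ i ∈ Jᶜ, ℓ i)}.ncard =
    {J : Finset (Fin (n - 1)) | J.card = k + 1 ∧ (⟨n - 2, by omega⟩ : Fin (n - 1)) ∈ J ∧
        ∑ i ∈ J, L' i < ∑ i ∈ Jᶜ, L' i}.ncard := by
  obtain ⟨q, rfl⟩ : ∃ q, n = q + 2 := ⟨n - 2, by omega⟩
  set a : Fin (q + 2) := ⟨q, by omega⟩ with ha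
  set b : Fin (q + 2) := ⟨q + 1, by omega⟩ with hbb
  set a' : Fin (q + 1) := ⟨q, by omega⟩ with ha'
  set S : ℝ := ∑ i, ℓ i with hS
  -- no median sets
  have hmed : ∀ J : Finset (Fin (q + 2)), ∑ i ∈ J, ℓ i ≠ ∑ i ∈ Jᶜ, ℓ i := by
    intro J h
    apply hgen (fun i => if i ∈ J then 1 else -1)
      (fun i => by by_cases hi : i ∈ J <;> simp [hi])
    rw [← Finset.sum_add_sum_compl J]
    have h1 : ∑ i ∈ J, (if i ∈ J then (1:ℝ) else -1) * ℓ i = ∑ i ∈ J, ℓ i :=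
      Finset.sum_congr rfl fun i hi => by simp [hi]
    have h2 : ∑ i ∈ Jᶜ, (if i ∈ J then (1:ℝ) else -1) * ℓ i = -∑ i ∈ Jᶜ, ℓ i := by
      rw [← Finset.sum_neg_distrib]
      exact Finset.sum_congr rfl fun i hi => by
        simp [Finset.mem_compl.mp hi]
    rw [h1, h2, h]; ring
  -- compl sums
  have hc1 : ∀ J : Finset (Fin (q + 2)), ∑ i ∈ Jᶜ, ℓ i = S - ∑ i ∈ J, ℓ i := by
    intro J
    have := Finset.sum_compl_add_sum J ℓ
    linarith [this]
  have hTot : ∑ i : Fin (q + 1), ℓ i.castSucc = S - ℓ b := by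
    have := Fin.sum_univ_castSucc (n := q + 1) ℓ
    have hb : Fin.last (q + 1) = b := rfl
    rw [hb] at this
    rw [← hS] at this
    linarith
  -- L' sums
  have hLsum : ∀ J' : Finset (Fin (q + 1)), a' ∈ J' →
      ∑ i ∈ J', L' i = ∑ i ∈ J', ℓ i.castSucc - ℓ b := by
    intro J' hmem
    have key : ∑ i ∈ J', (L' i - ℓ i.castSucc) = -ℓ b := by
      rw [Finset.sum_eq_single a']
      · rw [hL' a', if_pos (show ((a' : ℕ)) = q + 2 - 2 from rfl)]
        show ℓ a - ℓ b - ℓ a = -ℓ b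
        ring
      · intro i _ hi
        have hiv : (i : ℕ) ≠ q := fun h => hi (Fin.ext h)
        rw [hL' i, if_neg (show ¬((i : ℕ) = q + 2 - 2) by omega)]
        show ℓ i.castSucc - ℓ i.castSucc = 0
        exact sub_self _
      · intro h; exact absurd hmem h
    rw [Finset.sum_sub_distrib] at key
    linarith
  have hTot' : ∑ i : Fin (q + 1), L' i = S - 2 * ℓ b := by
    rw [hLsum Finset.univ (Finset.mem_univ _), hTot]; ring
  have hc2 : ∀ J' : Finset (Fin (q + 1)), ∑ i ∈ J'ᶜ, L' i = (S - 2 * ℓ b) - ∑ i ∈ J', L' i := by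
    intro J'
    have := Finset.sum_compl_add_sum J' L'
    rw [hTot'] at this
    linarith
  -- the image equation
  have key : {J : Finset (Fin (q + 2)) | J.card = k + 1 ∧ a ∈ J ∧ b ∉ J ∧
        (∑ i ∈ J, ℓ i < ∑ i ∈ Jᶜ, ℓ i ∨ ∑ i ∈ J, ℓ i = ∑ i ∈ Jᶜ, ℓ i)} =
      (fun J' : Finset (Fin (q + 1)) => J'.map Fin.castSuccEmb) ''
      {J' : Finset (Fin (q + 1)) | J'.card = k + 1 ∧ a' ∈ J' ∧
        ∑ i ∈ J', L' i < ∑ i ∈ J'ᶜ, L' i} := by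
    ext J
    simp only [Set.mem_setOf_eq, Set.mem_image]
    constructor
    · rintro ⟨hcard, haJ, hbJ, hshort⟩
      have hshort' : ∑ i ∈ J, ℓ i < ∑ i ∈ Jᶜ, ℓ i := hshort.resolve_right (hmed J)
      set J' : Finset (Fin (q + 1)) :=
        J.preimage Fin.castSucc (Fin.castSucc_injective _).injOn with hJ'
      have hmap : J'.map Fin.castSuccEmb = J := by
        ext x
        simp only [Finset.mem_map, Finset.mem_preimage, Fin.castSuccEmb_apply, hJ']
        constructor
        · rintro ⟨y, hy, rfl⟩; exact hy
        · intro hx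
          have hxne : x ≠ Fin.last (q + 1) := by
            rintro rfl; exact hbJ hx
          obtain ⟨y, rfl⟩ := Fin.exists_castSucc_eq.mpr hxne
          exact ⟨y, hx, rfl⟩
      have ha'J' : a' ∈ J' := by
        rw [hJ', Finset.mem_preimage]; exact haJ
      have hcard' : J'.card = k + 1 := by
        have hcm := Finset.card_map (s := J') Fin.castSuccEmb
        rw [hmap] at hcm
        omega
      refine ⟨J', ⟨hcard', ha'J', ?_⟩, hmap⟩
      have hsum : ∑ i ∈ J', ℓ i.castSucc = ∑ i ∈ J, ℓ i := by
        rw [← hmap, Finset.sum_map]; rfl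
      rw [hLsum J' ha'J', hc2 J', hLsum J' ha'J', hsum]
      rw [hc1 J] at hshort'
      linarith
    · rintro ⟨J', ⟨hcard, ha'J', hshort'⟩, rfl⟩
      have hsum : ∑ i ∈ J'.map Fin.castSuccEmb, ℓ i = ∑ i ∈ J', ℓ i.castSucc := by
        rw [Finset.sum_map]; rfl
      refine ⟨by rw [Finset.card_map, hcard], ?_, ?_, ?_⟩
      · have : Fin.castSucc a' = a := rfl
        rw [← this]
        exact Finset.mem_map' _ |>.mpr ha'J'
      · simp only [Finset.mem_map, Fin.castSuccEmb_apply]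
        rintro ⟨y, _, hy⟩
        have : (y : ℕ) = q + 1 := congrArg Fin.val hy
        omega
      · left
        rw [hc1, hsum]
        rw [hLsum J' ha'J', hc2 J', hLsum J' ha'J'] at hshort'
        linarith
  show {J : Finset (Fin (q + 2)) | J.card = k + 1 ∧ a ∈ J ∧ b ∉ J ∧
        (∑ i ∈ J, ℓ i < ∑ i ∈ Jᶜ, ℓ i ∨ ∑ i ∈ J, ℓ i = ∑ i ∈ Jᶜ, ℓ i)}.ncard =
      {J' : Finset (Fin (q + 1)) | J'.card = k + 1 ∧ a' ∈ J' ∧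
        ∑ i ∈ J', L' i < ∑ i ∈ J'ᶜ, L' i}.ncard
  rw [key, Set.ncard_image_of_injective _ (Finset.map_injective _)]
end

section
/- Let n > 3 and ℓ = (ℓ₁,…,ℓₙ) positive reals with ℓ₁ ≤ ⋯ ≤ ℓ_{n-1}. Then c₀(ℓ) + d_{n-3}(ℓ) ≥ 2 if and only if ℓ_{n-3} + ℓ_{n-2} > (1/2)∑_{i=1}^n ℓᵢ. (Equivalently: b₀(K_ℓ) = 2 iff the set {n−3, n−2} is long with respect to ℓ.) -/
private lemma ncard_le_one_aux {α : Type*} [DecidableEq α] (a : α) (P : Finset α → Prop) :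
    {J : Finset α | J.card = 1 ∧ a ∈ J ∧ P J}.ncard ≤ 1 := by
  have hsub : {J : Finset α | J.card = 1 ∧ a ∈ J ∧ P J} ⊆ {({a} : Finset α)} := by
    rintro J ⟨h1, h2, -⟩
    obtain ⟨b, rfl⟩ := Finset.card_eq_one.mp h1
    simp only [Finset.mem_singleton] at h2
    simp [h2]
  exact (Set.ncard_le_ncard hsub (Set.finite_singleton _)).trans (by simp)

/-- For `n > 3` and ordered positive `ℓ`, `c₀(ℓ) + d_{n-3}(ℓ) ≥ 2` (i.e.
`b₀(K_ℓ) = 2`, `K_ℓ` disconnected) if and only if the set `{n-3, n-2}`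
(0-based indices `n-4, n-3`) is long with respect to `ℓ`, i.e.
`ℓ_{n-3} + ℓ_{n-2} > (1/2) ∑ᵢ ℓᵢ`. -/
theorem stmt5 (n : ℕ) (hn : 3 < n) (ℓ : Fin n → ℝ) (hpos : ∀ i, 0 < ℓ i)
    (hmono : ∀ i j : Fin n, (i : ℕ) ≤ (j : ℕ) → (j : ℕ) < n - 1 → ℓ i ≤ ℓ j) :
    2 ≤ {J : Finset (Fin n) | J.card = 1 ∧ (⟨n - 2, by omega⟩ : Fin n) ∈ J ∧
          (⟨n - 1, by omega⟩ : Fin n) ∉ J ∧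
          (∑ i ∈ J, ℓ i < ∑ i ∈ Jᶜ, ℓ i ∨ ∑ i ∈ J, ℓ i = ∑ i ∈ Jᶜ, ℓ i)}.ncard
        + {J : Finset (Fin n) | J.card = n - 2 ∧ (⟨n - 2, by omega⟩ : Fin n) ∈ J ∧
          (⟨n - 1, by omega⟩ : Fin n) ∈ J ∧
          ∑ i ∈ J, ℓ i < ∑ i ∈ Jᶜ, ℓ i}.ncard
      ↔ (1 / 2) * ∑ i, ℓ i < ℓ ⟨n - 4, by omega⟩ + ℓ ⟨n - 3, by omega⟩ := by
  have hsumc : ∀ J : Finset (Fin n), ∑ i ∈ J, ℓ i + ∑ i ∈ Jᶜ, ℓ i = ∑ i, ℓ i :=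
    fun J => Finset.sum_add_sum_compl J ℓ
  constructor
  · intro h
    have hA := ncard_le_one_aux (⟨n - 2, by omega⟩ : Fin n)
        (fun J => (⟨n - 1, by omega⟩ : Fin n) ∉ J ∧
          (∑ i ∈ J, ℓ i < ∑ i ∈ Jᶜ, ℓ i ∨ ∑ i ∈ J, ℓ i = ∑ i ∈ Jᶜ, ℓ i))
    have hBne : {J : Finset (Fin n) | J.card = n - 2 ∧ (⟨n - 2, by omega⟩ : Fin n) ∈ J ∧
          (⟨n - 1, by omega⟩ : Fin n) ∈ J ∧
          ∑ i ∈ J, ℓ i < ∑ i ∈ Jᶜ, ℓ i}.Nonempty := by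
      apply Set.nonempty_of_ncard_ne_zero
      omega
    obtain ⟨J, hJcard, hJ2, hJ1, hJlt⟩ := hBne
    have hc : Jᶜ.card = 2 := by
      rw [Finset.card_compl, Fintype.card_fin, hJcard]; omega
    obtain ⟨a, b, hab, hJc⟩ := Finset.card_eq_two.mp hc
    have haJ : a ∉ J := by
      have : a ∈ Jᶜ := by rw [hJc]; simp
      exact Finset.mem_compl.mp this
    have hbJ : b ∉ J := by
      have : b ∈ Jᶜ := by rw [hJc]; simp
      exact Finset.mem_compl.mp this
    have ha2 : (a : ℕ) ≠ n - 2 := fun hh => haJ ((Fin.ext hh : a = ⟨n - 2, by omega⟩) ▸ hJ2)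
    have ha1 : (a : ℕ) ≠ n - 1 := fun hh => haJ ((Fin.ext hh : a = ⟨n - 1, by omega⟩) ▸ hJ1)
    have hb2 : (b : ℕ) ≠ n - 2 := fun hh => hbJ ((Fin.ext hh : b = ⟨n - 2, by omega⟩) ▸ hJ2)
    have hb1 : (b : ℕ) ≠ n - 1 := fun hh => hbJ ((Fin.ext hh : b = ⟨n - 1, by omega⟩) ▸ hJ1)
    have hale : (a : ℕ) ≤ n - 3 := by have := a.isLt; omega
    have hble : (b : ℕ) ≤ n - 3 := by have := b.isLt; omega
    have habv : (a : ℕ) ≠ (b : ℕ) := fun hh => hab (Fin.ext hh)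
    have hsum : ∑ i ∈ Jᶜ, ℓ i = ℓ a + ℓ b := by rw [hJc, Finset.sum_pair hab]
    have key : ℓ a + ℓ b ≤ ℓ ⟨n - 4, by omega⟩ + ℓ ⟨n - 3, by omega⟩ := by
      rcases lt_or_gt_of_ne habv with hlt | hlt
      · have h1 := hmono a ⟨n - 4, by omega⟩ (by simp; omega) (by simp; omega)
        have h2 := hmono b ⟨n - 3, by omega⟩ (by simp; omega) (by simp; omega)
        linarith
      · have h1 := hmono b ⟨n - 4, by omega⟩ (by simp; omega) (by simp; omega)
        have h2 := hmono a ⟨n - 3, by omega⟩ (by simp; omega) (by simp; omega)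
        linarith
    have htot := hsumc J
    linarith
  · intro h
    have hne43 : (⟨n - 4, by omega⟩ : Fin n) ≠ ⟨n - 3, by omega⟩ := by
      simp only [ne_eq, Fin.mk.injEq]; omega
    have hT : ℓ ⟨n - 4, by omega⟩ + ℓ ⟨n - 3, by omega⟩ + ℓ ⟨n - 2, by omega⟩
        + ℓ ⟨n - 1, by omega⟩ ≤ ∑ i, ℓ i := by
      have hle := Finset.sum_le_univ_sum_of_nonneg
        (s := ({⟨n - 4, by omega⟩, ⟨n - 3, by omega⟩, ⟨n - 2, by omega⟩,
          ⟨n - 1, by omega⟩} : Finset (Fin n))) (f := ℓ) (fun i => (hpos i).le)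
      have hd1 : (⟨n - 4, by omega⟩ : Fin n) ∉
          ({⟨n - 3, by omega⟩, ⟨n - 2, by omega⟩, ⟨n - 1, by omega⟩} : Finset (Fin n)) := by
        simp only [Finset.mem_insert, Finset.mem_singleton, Fin.mk.injEq]
        omega
      have hd2 : (⟨n - 3, by omega⟩ : Fin n) ∉
          ({⟨n - 2, by omega⟩, ⟨n - 1, by omega⟩} : Finset (Fin n)) := by
        simp only [Finset.mem_insert, Finset.mem_singleton, Fin.mk.injEq]
        omega
      have hd3 : (⟨n - 2, by omega⟩ : Fin n) ≠ (⟨n - 1, by omega⟩ : Fin n) := by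
        simp only [ne_eq, Fin.mk.injEq]
        omega
      rw [Finset.sum_insert hd1, Finset.sum_insert hd2, Finset.sum_pair hd3] at hle
      linarith
    have hmemA : ({(⟨n - 2, by omega⟩ : Fin n)} : Finset (Fin n)) ∈
        {J : Finset (Fin n) | J.card = 1 ∧ (⟨n - 2, by omega⟩ : Fin n) ∈ J ∧
          (⟨n - 1, by omega⟩ : Fin n) ∉ J ∧
          (∑ i ∈ J, ℓ i < ∑ i ∈ Jᶜ, ℓ i ∨ ∑ i ∈ J, ℓ i = ∑ i ∈ Jᶜ, ℓ i)} := by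
      refine ⟨Finset.card_singleton _, Finset.mem_singleton_self _, ?_, Or.inl ?_⟩
      · simp only [Finset.mem_singleton, Fin.mk.injEq]; omega
      · have hs := hsumc {(⟨n - 2, by omega⟩ : Fin n)}
        rw [Finset.sum_singleton] at hs ⊢
        have := hpos (⟨n - 1, by omega⟩ : Fin n)
        linarith
    have hmemB : (({⟨n - 4, by omega⟩, ⟨n - 3, by omega⟩} : Finset (Fin n)))ᶜ ∈
        {J : Finset (Fin n) | J.card = n - 2 ∧ (⟨n - 2, by omega⟩ : Fin n) ∈ J ∧
          (⟨n - 1, by omega⟩ : Fin n) ∈ J ∧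
          ∑ i ∈ J, ℓ i < ∑ i ∈ Jᶜ, ℓ i} := by
      refine ⟨?_, ?_, ?_, ?_⟩
      · rw [Finset.card_compl, Fintype.card_fin, Finset.card_pair hne43]
      · simp only [Finset.mem_compl, Finset.mem_insert, Finset.mem_singleton,
          Fin.mk.injEq]; omega
      · simp only [Finset.mem_compl, Finset.mem_insert, Finset.mem_singleton,
          Fin.mk.injEq]; omega
      · rw [compl_compl, Finset.sum_pair hne43]
        have hs := hsumc ({⟨n - 4, by omega⟩, ⟨n - 3, by omega⟩} : Finset (Fin n))ᶜ
        rw [compl_compl, Finset.sum_pair hne43] at hs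
        linarith
    have h1 : 0 < {J : Finset (Fin n) | J.card = 1 ∧ (⟨n - 2, by omega⟩ : Fin n) ∈ J ∧
          (⟨n - 1, by omega⟩ : Fin n) ∉ J ∧
          (∑ i ∈ J, ℓ i < ∑ i ∈ Jᶜ, ℓ i ∨ ∑ i ∈ J, ℓ i = ∑ i ∈ Jᶜ, ℓ i)}.ncard :=
      (Set.ncard_pos (Set.toFinite _)).mpr ⟨_, hmemA⟩
    have h2 : 0 < {J : Finset (Fin n) | J.card = n - 2 ∧ (⟨n - 2, by omega⟩ : Fin n) ∈ J ∧
          (⟨n - 1, by omega⟩ : Fin n) ∈ J ∧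
          ∑ i ∈ J, ℓ i < ∑ i ∈ Jᶜ, ℓ i}.ncard :=
      (Set.ncard_pos (Set.toFinite _)).mpr ⟨_, hmemB⟩
    omega
end

section
/- Let h > 0 and N ≥ 1, and let V be the potential of the anti-ferromagnetic mean-field XY model. If 0 < h < 1 then the range of V/N is contained in the interval [−h²/2, h + 1/2], and if h ≥ 1 then it is contained in [−h + 1/2, h + 1/2]. Moreover the value h + 1/2 is attained (at the configuration with all θⱼ = −π/2). -/
/-- The XY potential `V(θ) = (1/(2N)) ∑_{i,j} cos(θᵢ - θⱼ) - h ∑ᵢ sin θᵢ`. -/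
noncomputable def Vxy (N : ℕ) (h : ℝ) (θ : Fin N → ℝ) : ℝ :=
  (1 / (2 * (N : ℝ))) * ∑ i, ∑ j, Real.cos (θ i - θ j) - h * ∑ i, Real.sin (θ i)

/-!
Writing `M = (1/N) ∑ⱼ e^{iθⱼ}` for the magnetization, one has
`V/N = (|M - ih|² - h²)/2` with `|M| ≤ 1`. Hence `|M - ih|` lies between `max (h - 1) 0` and
`h + 1`, which gives both bounds, and `M = -i` (all `θⱼ = -π/2`) realises `|M - ih| = h + 1`.
-/

open Complex

theorem sum_sum_cos_sub_eq {ι : Type*} [Fintype ι] (θ : ι → ℝ) :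
    ∑ i, ∑ j, Real.cos (θ i - θ j) = (∑ i, Real.cos (θ i)) ^ 2 + (∑ i, Real.sin (θ i)) ^ 2 := by
  simp_rw [Real.cos_sub, Finset.sum_add_distrib, ← Finset.mul_sum, ← Finset.sum_mul, sq]

noncomputable def magnetization {N : ℕ} (θ : Fin N → ℝ) : ℂ :=
  (N : ℝ)⁻¹ • ∑ j, exp (θ j * I)

theorem magnetization_re {N : ℕ} (θ : Fin N → ℝ) :
    (magnetization θ).re = (∑ j, Real.cos (θ j)) / N := by
  simp only [magnetization, smul_re, re_sum, exp_ofReal_mul_I_re, smul_eq_mul, div_eq_inv_mul]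

theorem magnetization_im {N : ℕ} (θ : Fin N → ℝ) :
    (magnetization θ).im = (∑ j, Real.sin (θ j)) / N := by
  simp only [magnetization, smul_im, im_sum, exp_ofReal_mul_I_im, smul_eq_mul, div_eq_inv_mul]

theorem norm_magnetization_le_one {N : ℕ} (θ : Fin N → ℝ) : ‖magnetization θ‖ ≤ 1 := by
  rcases N.eq_zero_or_pos with rfl | hN
  · simp [magnetization]
  calc ‖magnetization θ‖ ≤ (N : ℝ)⁻¹ * ∑ j, ‖exp (θ j * I)‖ := by
        rw [magnetization, norm_smul, norm_inv, Real.norm_natCast]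
        gcongr
        exact norm_sum_le _ _
    _ = 1 := by simp [norm_exp_ofReal_mul_I, hN.ne']

theorem magnetization_const_neg_pi_div_two {N : ℕ} (hN : N ≠ 0) :
    magnetization (fun _ : Fin N => -(Real.pi / 2)) = -I := by
  simp [magnetization, hN, neg_div, ← exp_neg_pi_div_two_mul_I]

theorem Vxy_div_eq {N : ℕ} (hN : N ≠ 0) (h : ℝ) (θ : Fin N → ℝ) :
    Vxy N h θ / N = (‖magnetization θ - h * I‖ ^ 2 - h ^ 2) / 2 := by
  rw [Complex.sq_norm, normSq_apply]
  simp only [sub_re, sub_im, re_ofReal_mul, im_ofReal_mul, I_re, I_im, magnetization_re,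
    magnetization_im]
  rw [Vxy, sum_sum_cos_sub_eq]
  field_simp
  ring

/-- For `h > 0`: if `h < 1` the range of `V/N` lies in `[-h²/2, h + 1/2]`, if
`h ≥ 1` it lies in `[-h + 1/2, h + 1/2]`, and the value `h + 1/2` is attained
at the configuration with all `θⱼ = -π/2`. -/
theorem stmt9 (N : ℕ) (hN : 1 ≤ N) (h : ℝ) (hh : 0 < h) :
    (∀ θ : Fin N → ℝ,
      (h < 1 → Vxy N h θ / N ∈ Set.Icc (-h ^ 2 / 2) (h + 1 / 2)) ∧
      (1 ≤ h → Vxy N h θ / N ∈ Set.Icc (-h + 1 / 2) (h + 1 / 2))) ∧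
    Vxy N h (fun _ => -(Real.pi / 2)) / N = h + 1 / 2 := by
  have hN0 : N ≠ 0 := Nat.one_le_iff_ne_zero.mp hN
  have norm_hI : ‖(h : ℂ) * I‖ = h := by simp [hh.le]
  refine ⟨fun θ => ?_, ?_⟩
  · have hM := norm_magnetization_le_one θ
    have hupper : ‖magnetization θ - h * I‖ ≤ 1 + h :=
      (norm_sub_le _ _).trans (by rw [norm_hI]; linarith)
    have hlower : h - 1 ≤ ‖magnetization θ - h * I‖ := by
      have := norm_sub_norm_le (h * I : ℂ) (magnetization θ)
      rw [norm_sub_rev, norm_hI] at this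
      linarith
    have hnonneg := norm_nonneg (magnetization θ - h * I)
    rw [Vxy_div_eq hN0]
    exact ⟨fun _ => ⟨by nlinarith, by nlinarith⟩, fun _ => ⟨by nlinarith, by nlinarith⟩⟩
  · rw [Vxy_div_eq hN0, magnetization_const_neg_pi_div_two hN0, Complex.sq_norm, normSq_apply]
    simp only [sub_re, sub_im, neg_re, neg_im, re_ofReal_mul, im_ofReal_mul, I_re, I_im]
    ring
end
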